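/- arXiv:2211.11030 — 6 statements merged into one kernel-verified Lean document; each statement's English description precedes it below -/
import Mathlib

section
/- Let F : ℝ → ℝ be a bounded continuously differentiable function with bounded derivative, let σ > 0, and let ε be a standard Gaussian random variable. Then d/dx E[F(x + σε)] = E[(ε/σ) · F(x + σε)] for every x ∈ ℝ. -/
open MeasureTheory ProbabilityTheory Real Filter Metric

lemma gaussian_integral_eq_lebesgue (g : ℝ → ℝ) :
    ∫ ε, g ε ∂(gaussianReal 0 1) = ∫ ε, gaussianPDFReal 0 1 ε * g ε := by
  rw [gaussianReal_of_var_ne_zero 0 one_ne_zero, gaussianPDF_def]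
  have h : (fun x => ENNReal.ofReal (gaussianPDFReal 0 1 x))
      = fun x => ((Real.toNNReal (gaussianPDFReal 0 1 x) : NNReal) : ENNReal) := rfl
  rw [h, integral_withDensity_eq_integral_smul
    ((measurable_gaussianPDFReal 0 1).real_toNNReal) g]
  congr 1
  ext x
  simp [NNReal.smul_def, Real.coe_toNNReal _ (gaussianPDFReal_nonneg 0 1 x)]

lemma gaussianPDFReal_hasDerivAt (ε : ℝ) :
    HasDerivAt (gaussianPDFReal 0 1) (-ε * gaussianPDFReal 0 1 ε) ε := by
  have h1 : HasDerivAt (fun t : ℝ => -(t - 0) ^ 2 / (2 * ((1:NNReal):ℝ))) (-ε) ε := by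
    have h0 : HasDerivAt (fun t : ℝ => -(t - 0) ^ 2 / (2 * ((1:NNReal):ℝ)))
        (-((2:ℕ) * (ε - 0) ^ (2-1) * 1) / (2 * ((1:NNReal):ℝ))) ε :=
      ((((hasDerivAt_id ε).sub_const 0).pow 2).neg).div_const _
    convert h0 using 1
    push_cast
    ring
  have h3 := h1.exp.const_mul ((Real.sqrt (2 * π * ((1:NNReal):ℝ)))⁻¹)
  have heq : gaussianPDFReal 0 1
      = fun t => (Real.sqrt (2 * π * ((1:NNReal):ℝ)))⁻¹ *
        Real.exp (-(t - 0) ^ 2 / (2 * ((1:NNReal):ℝ))) := rfl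
  rw [heq]
  exact h3.congr_deriv (by beta_reduce; ring)

/-- ES gradient identity: d/dx E[F(x + σε)] = E[(ε/σ)·F(x + σε)] for ε ~ N(0,1). -/
theorem es_gradient_identity (F : ℝ → ℝ) (hF : ContDiff ℝ 1 F)
    (hFb : ∃ C, ∀ x, |F x| ≤ C) (hF'b : ∃ C, ∀ x, |deriv F x| ≤ C)
    (σ : ℝ) (hσ : 0 < σ) (x : ℝ) :
    HasDerivAt (fun y => ∫ ε, F (y + σ * ε) ∂(gaussianReal 0 1))
      (∫ ε, (ε / σ) * F (x + σ * ε) ∂(gaussianReal 0 1)) x := by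
  obtain ⟨C, hC⟩ := hFb
  obtain ⟨C', hC'⟩ := hF'b
  have hFd : Differentiable ℝ F := hF.differentiable one_ne_zero
  have hFc : Continuous F := hF.continuous
  have hF'c : Continuous (deriv F) := hF.continuous_deriv le_rfl
  set γ := gaussianReal 0 1 with hγ
  set p := gaussianPDFReal 0 1 with hpdef
  -- step 1: differentiate under the integral
  have key := hasDerivAt_integral_of_dominated_loc_of_deriv_le (μ := γ) (x₀ := x)
    (F := fun y ε => F (y + σ * ε)) (F' := fun y ε => deriv F (y + σ * ε))
    (bound := fun _ => C') (s := ball x 1) (ball_mem_nhds x one_pos)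
    (Eventually.of_forall fun y =>
      (hFc.comp (by continuity)).aestronglyMeasurable)
    ((integrable_const C).mono' (hFc.comp (by continuity)).aestronglyMeasurable
      (ae_of_all _ fun ε => by simpa using hC (x + σ * ε)))
    ((hF'c.comp (by continuity)).aestronglyMeasurable)
    (ae_of_all _ fun ε y _ => by simpa using hC' (y + σ * ε))
    (integrable_const C')
    (ae_of_all _ fun ε y _ => by
      have h := (hFd (y + σ * ε)).hasDerivAt.comp y
        (((hasDerivAt_id y).add_const (σ * ε)))
      simpa [Function.comp_def] using h)
  have hDer := key.2
  -- step 2: Gaussian integration by parts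
  have hmom : Integrable (fun ε : ℝ => |ε| * Real.exp (-(1/2 : ℝ) * ε ^ 2)) := by
    have := (integrable_mul_exp_neg_mul_sq (by norm_num : (0:ℝ) < 1/2)).norm
    simpa [Real.norm_eq_abs, abs_mul, abs_of_pos (Real.exp_pos _)] using this
  have hpmom : Integrable (fun ε : ℝ => |ε| * p ε) := by
    have hpform : (fun ε : ℝ => |ε| * p ε)
        = fun ε => (Real.sqrt (2 * π * ((1:NNReal):ℝ)))⁻¹
            * (|ε| * Real.exp (-(1/2 : ℝ) * ε ^ 2)) := by
      ext ε
      simp only [hpdef, gaussianPDFReal, NNReal.coe_one]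
      ring_nf
    rw [hpform]
    exact hmom.const_mul _
  have hpint : Integrable p := integrable_gaussianPDFReal 0 1
  have hpmeas : Measurable p := measurable_gaussianPDFReal 0 1
  have hpnn : ∀ t, 0 ≤ p t := gaussianPDFReal_nonneg 0 1
  set u : ℝ → ℝ := fun ε => F (x + σ * ε) with hu_def
  set u' : ℝ → ℝ := fun ε => σ * deriv F (x + σ * ε) with hu'_def
  have hu : ∀ ε, HasDerivAt u (u' ε) ε := fun ε => by
    have hlin : HasDerivAt (fun ε : ℝ => x + σ * ε) σ ε := by
      simpa using ((hasDerivAt_id ε).const_mul σ).const_add x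
    have h := (hFd (x + σ * ε)).hasDerivAt.comp ε hlin
    simpa [hu'_def, mul_comm, Function.comp_def] using h
  have hv : ∀ ε, HasDerivAt p (-ε * p ε) ε := gaussianPDFReal_hasDerivAt
  have huc : Continuous u := hFc.comp (by continuity)
  have hu'c : Continuous u' :=
    continuous_const.mul (hF'c.comp (by continuity : Continuous fun ε : ℝ => x + σ * ε))
  have huv' : Integrable (u * fun ε => -ε * p ε) := by
    refine (hpmom.const_mul C).mono' ?_ ?_
    · exact (huc.measurable.mul (measurable_id.neg.mul hpmeas)).aestronglyMeasurable
    refine ae_of_all _ fun ε => ?_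
    have h0 : |F (x + σ * ε)| ≤ C := hC _
    have h1 : ‖u ε * (-ε * p ε)‖ = |F (x + σ * ε)| * (|ε| * p ε) := by
      simp only [hu_def, norm_mul, Real.norm_eq_abs, abs_neg, abs_of_nonneg (hpnn ε)]
    rw [Pi.mul_apply, h1]
    exact mul_le_mul_of_nonneg_right h0 (mul_nonneg (abs_nonneg ε) (hpnn ε))
  have hu'v : Integrable (u' * p) := by
    refine (hpint.const_mul (σ * C')).mono' ?_ ?_
    · exact (hu'c.measurable.mul hpmeas).aestronglyMeasurable
    refine ae_of_all _ fun ε => ?_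
    have h0 : |deriv F (x + σ * ε)| ≤ C' := hC' _
    have h1 : ‖u' ε * p ε‖ = σ * |deriv F (x + σ * ε)| * p ε := by
      simp only [hu'_def, norm_mul, Real.norm_eq_abs, abs_of_nonneg (hpnn ε), abs_of_pos hσ]
    rw [Pi.mul_apply, h1]
    exact mul_le_mul_of_nonneg_right (mul_le_mul_of_nonneg_left h0 hσ.le) (hpnn ε)
  have huv : Integrable (u * p) := by
    refine (hpint.const_mul C).mono' ?_ ?_
    · exact (huc.measurable.mul hpmeas).aestronglyMeasurable
    refine ae_of_all _ fun ε => ?_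
    have h0 : |F (x + σ * ε)| ≤ C := hC _
    have h1 : ‖u ε * p ε‖ = |F (x + σ * ε)| * p ε := by
      simp only [hu_def, norm_mul, Real.norm_eq_abs, abs_of_nonneg (hpnn ε)]
    rw [Pi.mul_apply, h1]
    exact mul_le_mul_of_nonneg_right h0 (hpnn ε)
  have hibp := integral_mul_deriv_eq_deriv_mul_of_integrable (fun ε _ => hu ε) (fun ε _ => hv ε) huv' hu'v huv
  -- hibp : ∫ ε, u ε * (-ε * p ε) = - ∫ ε, u' ε * p ε
  have heq : (∫ ε, deriv F (x + σ * ε) ∂γ) = ∫ ε, (ε / σ) * F (x + σ * ε) ∂γ := by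
    rw [hγ, gaussian_integral_eq_lebesgue, gaussian_integral_eq_lebesgue]
    apply mul_left_cancel₀ (ne_of_gt hσ)
    rw [← integral_const_mul, ← integral_const_mul]
    have lhs_eq : (fun ε => σ * (gaussianPDFReal 0 1 ε * deriv F (x + σ * ε)))
        = fun ε => u' ε * p ε := by
      ext ε; simp only [hu'_def, hpdef]; ring
    have rhs_eq : (fun ε => σ * (gaussianPDFReal 0 1 ε * (ε / σ * F (x + σ * ε))))
        = fun ε => -(u ε * (-ε * p ε)) := by
      ext ε
      simp only [hu_def, hpdef]
      field_simp
    rw [lhs_eq, rhs_eq, integral_neg, hibp, neg_neg]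
  rw [← heq]
  exact hDer
end

section
/- Let S, M, A be finite nonempty types, and let f g : S → M be arbitrary functions (two adversaries). Suppose two tabular learners store policies π, χ : ℕ → S → M → (A → ℝ) updated by the same update rule, where the update to the entry at (s, m) at time t+1 depends only on the current value at (s, m), the state s, and data generated from transitions whose probabilities and rewards are independent of the message coordinate m. If the initializations satisfy π 0 s m = π 0 s m' for all s, m, m' (uniform along M), then π t s (f s) = χ t s (g s) for all t ∈ ℕ and all s ∈ S. -/
/-! The table entry the learner actually executes, `(s, f s)`, is updated at every step, so it
follows the trajectory of the update rule started from its initial value, whatever the other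
entries do. Uniform initialisation makes that initial value the same for every adversary. -/

def updateTrajectory {S α : Type*} (U : ℕ → S → α → α) (x₀ : S → α) : ℕ → S → α
  | 0, s => x₀ s
  | t + 1, s => U t s (updateTrajectory U x₀ t s)

theorem executed_entry_eq_updateTrajectory {S M α : Type*} [DecidableEq M]
    (f : S → M) (π : ℕ → S → M → α) (U : ℕ → S → α → α)
    (hπ : ∀ t s m, π (t + 1) s m = if m = f s then U t s (π t s m) else π t s m) :
    ∀ t s, π t s (f s) = updateTrajectory U (fun s => π 0 s (f s)) t s
  | 0, _ => rfl
  | t + 1, s => by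
    rw [hπ, if_pos rfl, executed_entry_eq_updateTrajectory f π U hπ t s]
    rfl

theorem tabular_victim_independent_of_adversary_general
    {S M A : Type} [DecidableEq M]
    (f g : S → M)
    (π χ : ℕ → S → M → A → ℝ)
    (U : ℕ → S → (A → ℝ) → (A → ℝ))
    (hπ : ∀ t s m, π (t + 1) s m = if m = f s then U t s (π t s m) else π t s m)
    (hχ : ∀ t s m, χ (t + 1) s m = if m = g s then U t s (χ t s m) else χ t s m)
    (hunif : ∀ s m m', π 0 s m = π 0 s m')
    (hinit : ∀ s m, π 0 s m = χ 0 s m) :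
    ∀ (t : ℕ) (s : S), π t s (f s) = χ t s (g s) := by
  have same_start : (fun s => π 0 s (f s)) = fun s => χ 0 s (g s) :=
    funext fun s => (hunif s (f s) (g s)).trans (hinit s (g s))
  intro t s
  rw [executed_entry_eq_updateTrajectory f π U hπ, executed_entry_eq_updateTrajectory g χ U hχ,
    same_start]

/-- Proposition 1 (tabular independence from adversaries): two copies of the same tabular
learner, trained against adversaries `f` and `g` respectively, execute identical policies
provided uniform initialisation along the message axis. The update rule `U` for the entry
at `(s, m)` depends only on the time, the state `s`, and the current value at `(s, m)`
(environment data being independent of the message coordinate). -/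
theorem tabular_victim_independent_of_adversary
    {S M A : Type} [Fintype S] [Fintype M] [Fintype A]
    [Nonempty S] [Nonempty M] [Nonempty A] [DecidableEq M]
    (f g : S → M)
    (π χ : ℕ → S → M → A → ℝ)
    (U : ℕ → S → (A → ℝ) → (A → ℝ))
    (hπ : ∀ t s m, π (t + 1) s m = if m = f s then U t s (π t s m) else π t s m)
    (hχ : ∀ t s m, χ (t + 1) s m = if m = g s then U t s (χ t s m) else χ t s m)
    (hunif : ∀ s m m', π 0 s m = π 0 s m')
    (hinit : ∀ s m, π 0 s m = χ 0 s m) :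
    ∀ (t : ℕ) (s : S), π t s (f s) = χ t s (g s) :=
  tabular_victim_independent_of_adversary_general f g π χ U hπ hχ hunif hinit
end

section
/- Let S, M, A be finite types and let f g : S → M. Define update operators U that, given a table T : S → M → (A → ℝ) and a state s, modify only the entry T s m at the encountered message m, with the new value depending only on (s, the old value T s m, and message-independent environment data). Prove by induction: if T₀ is uniform along M (T₀ s m = T₀ s m' for all m, m'), then for every sequence of visited states s₁, …, s_t, the table obtained using messages f(s_i) agrees at (s, f(s)) with the table obtained using messages g(s_i) at (s, g(s)), for every s ∈ S. -/
/-! Along the diagonal `m = f s`, the update rule for a table indexed by augmented states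
`(s, m)` reduces to the update rule of a table indexed by states alone: at time `t` the entry
at `(s, f s)` changes iff `s = vs t`, since the update touches `(vs t, f (vs t))` only.
Hence both diagonals are the run of the same message-free learner, started from the same
initial table because `T₀` is uniform along `M`. -/

section TabularRun

variable {S M X : Type} [DecidableEq S]

def tabularRun (U : S → X → X) (vs : ℕ → S) (d₀ : S → X) : ℕ → S → X
  | 0 => d₀
  | t + 1 => fun s => if s = vs t then U s (tabularRun U vs d₀ t s) else tabularRun U vs d₀ t s

variable [DecidableEq M]

theorem update_apply_diag {U : S → X → X} {vs : ℕ → S} {f : S → M} {T : ℕ → S → M → X}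
    (hT : ∀ t s m, T (t + 1) s m =
      if s = vs t ∧ m = f (vs t) then U s (T t s m) else T t s m)
    (t : ℕ) (s : S) :
    T (t + 1) s (f s) = if s = vs t then U s (T t s (f s)) else T t s (f s) := by
  rw [hT]
  by_cases h : s = vs t <;> simp [h]

theorem diag_eq_tabularRun {U : S → X → X} {vs : ℕ → S} {f : S → M} {T : ℕ → S → M → X}
    (hT : ∀ t s m, T (t + 1) s m =
      if s = vs t ∧ m = f (vs t) then U s (T t s m) else T t s m)
    (t : ℕ) (s : S) :
    T t s (f s) = tabularRun U vs (fun s => T 0 s (f s)) t s := by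
  induction t generalizing s with
  | zero => rfl
  | succ t ih => simp only [update_apply_diag hT, tabularRun, ih]

end TabularRun

theorem tabular_update_induction_general
    {S M A : Type} [DecidableEq S] [DecidableEq M]
    (f g : S → M)
    (T₀ : S → M → A → ℝ)
    (hT₀ : ∀ s m m', T₀ s m = T₀ s m')
    (U : S → (A → ℝ) → (A → ℝ))
    (vs : ℕ → S)
    (Tf Tg : ℕ → S → M → A → ℝ)
    (hTf0 : Tf 0 = T₀) (hTg0 : Tg 0 = T₀)
    (hTf : ∀ t s m, Tf (t + 1) s m =
      if s = vs t ∧ m = f (vs t) then U s (Tf t s m) else Tf t s m)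
    (hTg : ∀ t s m, Tg (t + 1) s m =
      if s = vs t ∧ m = g (vs t) then U s (Tg t s m) else Tg t s m) :
    ∀ (t : ℕ) (s : S), Tf t s (f s) = Tg t s (g s) := by
  intro t s
  have h_init : (fun s => Tf 0 s (f s)) = fun s => Tg 0 s (g s) := by
    funext s
    rw [hTf0, hTg0, hT₀]
  rw [diag_eq_tabularRun hTf, diag_eq_tabularRun hTg, h_init]

/-- Inductive core of Proposition 1: tabular updates at distinct augmented states do not
interfere. Starting from a table `T₀` uniform along `M`, and updating, at each time `t`,
only the entry at the visited state `vs t` and the encountered message (`f (vs t)` resp.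
`g (vs t)`), via an operator `U` depending only on the state and the old entry, the table
obtained with messages from `f` agrees at `(s, f s)` with the table obtained with messages
from `g` at `(s, g s)`, for every state `s` and every time `t`. -/
theorem tabular_update_induction
    {S M A : Type} [Fintype S] [Fintype M] [Fintype A] [DecidableEq S] [DecidableEq M]
    (f g : S → M)
    (T₀ : S → M → A → ℝ)
    (hT₀ : ∀ s m m', T₀ s m = T₀ s m')
    (U : S → (A → ℝ) → (A → ℝ))
    (vs : ℕ → S)
    (Tf Tg : ℕ → S → M → A → ℝ)
    (hTf0 : Tf 0 = T₀) (hTg0 : Tg 0 = T₀)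
    (hTf : ∀ t s m, Tf (t + 1) s m =
      if s = vs t ∧ m = f (vs t) then U s (Tf t s m) else Tf t s m)
    (hTg : ∀ t s m, Tg (t + 1) s m =
      if s = vs t ∧ m = g (vs t) then U s (Tg t s m) else Tg t s m) :
    ∀ (t : ℕ) (s : S), Tf t s (f s) = Tg t s (g s) :=
  tabular_update_induction_general f g T₀ hT₀ U vs Tf Tg hTf0 hTg0 hTf hTg
end

section
/- Let S, A be finite nonempty types, M a finite nonempty type, f : S → M, and let P : S → A → (S → ℝ≥0) be a transition kernel and R : S → A → ℝ a reward function on the base MDP. Define the augmented MDP on state space S × M with transitions P̄((s',m')|(s,m),a) = P(s'|s,a) · [m' = f(s')] and rewards R̄((s,m),a) = R(s,a). Then for any policy π̄ on the augmented MDP, the induced policy π(a|s) := π̄(a|(s, f(s))) satisfies Q^π(s,a) = Q^{π̄}((s, f(s)), a) for all s, a, where Q denotes the discounted state-action value function with discount γ ∈ [0,1). -/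
open scoped NNReal

/-- Value correspondence (Proposition 2, policy-evaluation step): if `Q` solves the Bellman
equation for the induced base policy `π(a|s) = π̄(a|(s, f s))` and `Qbar` solves the Bellman
equation for `π̄` on the augmented Cheap Talk MDP (kernel `P̄((s',m')|(s,m),a) =
P(s'|s,a)·[m' = f s']`, reward `R̄((s,m),a) = R(s,a)`), then
`Q(s,a) = Qbar((s, f s), a)` for all `s, a`. -/
theorem cheap_talk_value_correspondence
    {S M A : Type} [Fintype S] [Fintype M] [Fintype A]
    [Nonempty S] [Nonempty M] [Nonempty A] [DecidableEq M]
    (γ : ℝ) (hγ0 : 0 ≤ γ) (hγ1 : γ < 1)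
    (P : S → A → S → ℝ≥0) (hP : ∀ s a, ∑ s', P s a s' = 1)
    (R : S → A → ℝ)
    (f : S → M)
    (πbar : S × M → A → ℝ)
    (hπnn : ∀ p a, 0 ≤ πbar p a) (hπ1 : ∀ p, ∑ a, πbar p a = 1)
    (π : S → A → ℝ) (hπ : ∀ s a, π s a = πbar (s, f s) a)
    (Q : S → A → ℝ)
    (hQ : ∀ s a, Q s a =
      R s a + γ * ∑ s', (P s a s' : ℝ) * ∑ a', π s' a' * Q s' a')
    (Qbar : S × M → A → ℝ)
    (hQbar : ∀ p a, Qbar p a =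
      R p.1 a + γ * ∑ q : S × M,
        (if q.2 = f q.1 then (P p.1 a q.1 : ℝ) else 0) *
          ∑ a', πbar q a' * Qbar q a') :
    ∀ s a, Q s a = Qbar (s, f s) a := by
  -- error function
  set E : S → A → ℝ := fun s a => Q s a - Qbar (s, f s) a with hE
  -- reduce augmented Bellman sum to a sum over S
  have hsum : ∀ s a, (∑ q : S × M,
      (if q.2 = f q.1 then (P s a q.1 : ℝ) else 0) * ∑ a', πbar q a' * Qbar q a')
      = ∑ s', (P s a s' : ℝ) * ∑ a', πbar (s', f s') a' * Qbar (s', f s') a' := by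
    intro s a
    rw [Fintype.sum_prod_type]
    refine Finset.sum_congr rfl (fun s' _ => ?_)
    rw [Finset.sum_eq_single (f s')]
    · simp
    · intro m' _ hm'
      simp [hm']
    · simp
  -- error recursion
  have hErec : ∀ s a, E s a = γ * ∑ s', (P s a s' : ℝ) * ∑ a', π s' a' * E s' a' := by
    intro s a
    have h1 := hQ s a
    have h2 := hQbar (s, f s) a
    rw [hsum] at h2
    simp only [hE]
    rw [h1, h2]
    ring_nf
    rw [← mul_sub, ← Finset.sum_sub_distrib]
    congr 1
    refine Finset.sum_congr rfl (fun s' _ => ?_)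
    rw [← mul_sub, ← Finset.sum_sub_distrib]
    have : ∀ a', π s' a' * Q s' a' - πbar (s', f s') a' * Qbar (s', f s') a'
        = π s' a' * (Q s' a' - Qbar (s', f s') a') := by
      intro a'; rw [hπ]; ring
    simp only [this]
    simp only [mul_sub]
  -- sup norm
  obtain ⟨p0, _, hp0⟩ := Finset.exists_max_image (Finset.univ : Finset (S × A))
    (fun p => |E p.1 p.2|) ⟨Classical.arbitrary _, Finset.mem_univ _⟩
  set C : ℝ := |E p0.1 p0.2| with hC
  have hCnn : 0 ≤ C := abs_nonneg _
  have hCb : ∀ s a, |E s a| ≤ C := fun s a => hp0 (s, a) (Finset.mem_univ _)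
  -- contraction bound
  have hkey : C ≤ γ * C := by
    calc C = |E p0.1 p0.2| := rfl
      _ = |γ * ∑ s', (P p0.1 p0.2 s' : ℝ) * ∑ a', π s' a' * E s' a'| := by
          rw [hErec]
      _ ≤ γ * ∑ s', (P p0.1 p0.2 s' : ℝ) * ∑ a', π s' a' * C := by
          rw [abs_mul, abs_of_nonneg hγ0]
          refine mul_le_mul_of_nonneg_left ?_ hγ0
          refine (Finset.abs_sum_le_sum_abs _ _).trans ?_
          refine Finset.sum_le_sum (fun s' _ => ?_)
          rw [abs_mul, abs_of_nonneg (P p0.1 p0.2 s').coe_nonneg]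
          refine mul_le_mul_of_nonneg_left ?_ (P p0.1 p0.2 s').coe_nonneg
          refine (Finset.abs_sum_le_sum_abs _ _).trans ?_
          refine Finset.sum_le_sum (fun a' _ => ?_)
          rw [abs_mul]
          have hπnn' : 0 ≤ π s' a' := by rw [hπ]; exact hπnn _ _
          rw [abs_of_nonneg hπnn']
          exact mul_le_mul_of_nonneg_left (hCb s' a') hπnn'
      _ = γ * C := by
          congr 1
          have : ∀ s', (∑ a', π s' a' * C) = C := by
            intro s'
            rw [← Finset.sum_mul]
            have : (∑ a', π s' a') = 1 := by
              simp only [hπ]; exact hπ1 _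
            rw [this, one_mul]
          simp only [this]
          rw [← Finset.sum_mul]
          have : (∑ s', (P p0.1 p0.2 s' : ℝ)) = 1 := by
            rw [← NNReal.coe_sum, hP, NNReal.coe_one]
          rw [this, one_mul]
  have hC0 : C = 0 := by
    nlinarith
  intro s a
  have := hCb s a
  rw [hC0] at this
  have : |E s a| = 0 := le_antisymm this (abs_nonneg _)
  have := abs_eq_zero.mp this
  simpa [hE, sub_eq_zero] using this
end

section
/- With the setup of the augmented Cheap Talk MDP (deterministic message function f : S → M, transitions and rewards independent of the message), the optimal state-action value function Q̄* of the augmented MDP satisfies Q̄*((s, f(s)), a) = Q*(s, a) for all s ∈ S and a ∈ A, where Q* is the optimal value function of the base MDP. -/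
/-!
On the graph `{(s, f s)}` the augmented kernel puts mass `P(s'|s,a)` exactly on `(s', f s')`,
so the restriction `(s, a) ↦ Q̄*((s, f s), a)` satisfies the Bellman optimality equation of the
base MDP. That operator is a `γ`-contraction in the sup norm, hence has at most one fixed
point, and the restriction equals `Q*`.
-/

open scoped NNReal

open Finset Function

theorem Finset.abs_sup'_sub_sup'_le {α : Type*} {s : Finset α} (hs : s.Nonempty) {f g : α → ℝ}
    {c : ℝ} (h : ∀ x ∈ s, |f x - g x| ≤ c) : |s.sup' hs f - s.sup' hs g| ≤ c := by
  rw [abs_sub_le_iff, sub_le_iff_le_add, sub_le_iff_le_add]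
  constructor <;> refine sup'_le _ _ fun x hx => ?_
  · linarith [(abs_sub_le_iff.1 (h x hx)).1, le_sup' g hx]
  · linarith [(abs_sub_le_iff.1 (h x hx)).2, le_sup' f hx]

namespace FiniteMDP

variable {S A : Type*} [Fintype S] [Fintype A] [Nonempty A]

noncomputable def bellmanOptimality (γ : ℝ) (P : S → A → S → ℝ≥0) (R : S → A → ℝ)
    (Q : S → A → ℝ) : S → A → ℝ :=
  fun s a => R s a + γ * ∑ s', (P s a s' : ℝ) * univ.sup' univ_nonempty (Q s')

variable {γ : ℝ} {P : S → A → S → ℝ≥0} {R : S → A → ℝ}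

theorem dist_bellmanOptimality_le (hγ : 0 ≤ γ) (hP : ∀ s a, ∑ s', P s a s' = 1)
    (Q Q' : S → A → ℝ) :
    dist (bellmanOptimality γ P R Q) (bellmanOptimality γ P R Q') ≤ γ * dist Q Q' := by
  have hγd : 0 ≤ γ * dist Q Q' := by positivity
  refine (dist_pi_le_iff hγd).2 fun s => (dist_pi_le_iff hγd).2 fun a => ?_
  have hsup (s' : S) :
      |univ.sup' univ_nonempty (Q s') - univ.sup' univ_nonempty (Q' s')| ≤ dist Q Q' :=
    abs_sup'_sub_sup'_le _ fun a' _ =>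
      (dist_le_pi_dist (Q s') (Q' s') a').trans (dist_le_pi_dist Q Q' s')
  calc dist (bellmanOptimality γ P R Q s a) (bellmanOptimality γ P R Q' s a)
      = γ * |∑ s', (P s a s' : ℝ) *
          (univ.sup' univ_nonempty (Q s') - univ.sup' univ_nonempty (Q' s'))| := by
        simp only [bellmanOptimality, Real.dist_eq, add_sub_add_left_eq_sub, ← mul_sub,
          ← sum_sub_distrib, abs_mul, abs_of_nonneg hγ]
    _ ≤ γ * ∑ s', (P s a s' : ℝ) * dist Q Q' := by
        gcongr
        refine (abs_sum_le_sum_abs _ _).trans (sum_le_sum fun s' _ => ?_)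
        rw [abs_mul, NNReal.abs_eq]
        gcongr
        exact hsup s'
    _ = γ * dist Q Q' := by rw [← sum_mul, ← NNReal.coe_sum, hP, NNReal.coe_one, one_mul]

theorem eq_of_isFixedPt_bellmanOptimality (hγ0 : 0 ≤ γ) (hγ1 : γ < 1)
    (hP : ∀ s a, ∑ s', P s a s' = 1) {Q Q' : S → A → ℝ}
    (hQ : IsFixedPt (bellmanOptimality γ P R) Q)
    (hQ' : IsFixedPt (bellmanOptimality γ P R) Q') :
    Q = Q' := by
  have h := dist_bellmanOptimality_le (R := R) hγ0 hP Q Q'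
  rw [hQ.eq, hQ'.eq] at h
  exact dist_le_zero.1 (by nlinarith [dist_nonneg (x := Q) (y := Q')])

end FiniteMDP

theorem Fintype.sum_prod_graph {S M β : Type*} [Fintype S] [Fintype M] [DecidableEq M]
    [NonUnitalNonAssocSemiring β] (f : S → M) (g : S → β) (h : S × M → β) :
    ∑ q : S × M, (if q.2 = f q.1 then g q.1 else 0) * h q = ∑ s, g s * h (s, f s) := by
  simp only [Fintype.sum_prod_type, ite_mul, zero_mul, sum_ite_eq']

theorem cheap_talk_optimal_value_correspondence_general
    {S M A : Type} [Fintype S] [Fintype M] [Fintype A]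
    [Nonempty A] [DecidableEq M]
    (γ : ℝ) (hγ0 : 0 ≤ γ) (hγ1 : γ < 1)
    (P : S → A → S → ℝ≥0) (hP : ∀ s a, ∑ s', P s a s' = 1)
    (R : S → A → ℝ)
    (f : S → M)
    (Qstar : S → A → ℝ)
    (hQstar : ∀ s a, Qstar s a =
      R s a + γ * ∑ s', (P s a s' : ℝ) *
        Finset.univ.sup' Finset.univ_nonempty (fun a' => Qstar s' a'))
    (Qbar : S × M → A → ℝ)
    (hQbar : ∀ p a, Qbar p a =
      R p.1 a + γ * ∑ q : S × M,
        (if q.2 = f q.1 then (P p.1 a q.1 : ℝ) else 0) *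
          Finset.univ.sup' Finset.univ_nonempty (fun a' => Qbar q a')) :
    ∀ s a, Qbar (s, f s) a = Qstar s a := by
  have hstar : IsFixedPt (FiniteMDP.bellmanOptimality γ P R) Qstar :=
    funext₂ fun s a => (hQstar s a).symm
  have hbar : IsFixedPt (FiniteMDP.bellmanOptimality γ P R) fun s => Qbar (s, f s) :=
    funext₂ fun s a => by
      rw [hQbar, Fintype.sum_prod_graph f (fun s' => (P s a s' : ℝ))]
      rfl
  exact congrFun₂ (FiniteMDP.eq_of_isFixedPt_bellmanOptimality hγ0 hγ1 hP hbar hstar)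

/-- Proposition 2 (optimality step): the optimal value function `Qbar` of the augmented
Cheap Talk MDP (kernel `P̄((s',m')|(s,m),a) = P(s'|s,a)·[m' = f s']`, reward
`R̄((s,m),a) = R(s,a)`) satisfies `Qbar((s, f s), a) = Qstar(s, a)`, where `Qstar` is the
optimal value function of the base MDP. Both are characterised as fixed points of the
respective Bellman optimality operators. -/
theorem cheap_talk_optimal_value_correspondence
    {S M A : Type} [Fintype S] [Fintype M] [Fintype A]
    [Nonempty S] [Nonempty M] [Nonempty A] [DecidableEq M]
    (γ : ℝ) (hγ0 : 0 ≤ γ) (hγ1 : γ < 1)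
    (P : S → A → S → ℝ≥0) (hP : ∀ s a, ∑ s', P s a s' = 1)
    (R : S → A → ℝ)
    (f : S → M)
    (Qstar : S → A → ℝ)
    (hQstar : ∀ s a, Qstar s a =
      R s a + γ * ∑ s', (P s a s' : ℝ) *
        Finset.univ.sup' Finset.univ_nonempty (fun a' => Qstar s' a'))
    (Qbar : S × M → A → ℝ)
    (hQbar : ∀ p a, Qbar p a =
      R p.1 a + γ * ∑ q : S × M,
        (if q.2 = f q.1 then (P p.1 a q.1 : ℝ) else 0) *
          Finset.univ.sup' Finset.univ_nonempty (fun a' => Qbar q a')) :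
    ∀ s a, Qbar (s, f s) a = Qstar s a :=
  cheap_talk_optimal_value_correspondence_general γ hγ0 hγ1 P hP R f Qstar hQstar Qbar hQbar
end

section
/- Let S, M, A be finite types with uniform initialisation along M, and suppose a tabular Q-learning-style update modifies only the table entry at the visited augmented state (s, f(s)): Q_{t+1}(s, f(s), a) = (1−α)·Q_t(s, f(s), a) + α·(r + γ·max_{a'} Q_t(s', f(s'), a')) for visited transition (s, a, r, s'), leaving all other entries unchanged. Then for any two adversaries f, g and identical visited base transition sequences (s_t, a_t, r_t, s_{t+1}), the resulting tables satisfy Q_t^f(s, f(s), a) = Q_t^g(s, g(s), a) for all t, s, a. -/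
/-!
The update touches only the entry `(s_t, f s_t, a_t)` and bootstraps from the executed entries
`(s', f s')`, so the executed slice `(s, a) ↦ Q_t (s, f s, a)` evolves by an update rule on
`S × A` in which `f` no longer appears. Uniform initialisation makes the slices of any two
adversaries agree at `t = 0`, hence at every `t`.
-/

section

variable {S M A V : Type*} [DecidableEq S] [DecidableEq A]

def updateVisited (s₀ : S) (a₀ : A) (s' : S) (u : V → (A → V) → V) (E : S → A → V) :
    S → A → V :=
  fun s a => if s = s₀ ∧ a = a₀ then u (E s a) (E s') else E s a

theorem executed_eq_updateVisited [DecidableEq M] (f : S → M) (s₀ : S) (a₀ : A) (s' : S)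
    (u : V → (A → V) → V) (Q Q' : S → M → A → V)
    (hQ : ∀ s m a, Q' s m a =
      if s = s₀ ∧ m = f s₀ ∧ a = a₀ then u (Q s m a) (fun a' => Q s' (f s') a')
      else Q s m a) :
    (fun s a => Q' s (f s) a) = updateVisited s₀ a₀ s' u (fun s a => Q s (f s) a) := by
  funext s a
  rw [hQ]
  exact if_congr ⟨fun h => ⟨h.1, h.2.2⟩, fun h => ⟨h.1, congrArg f h.1, h.2⟩⟩ rfl rfl

end

theorem q_learning_independent_of_adversary_general
    {S M A : Type} [Fintype A]
    [Nonempty A] [DecidableEq S] [DecidableEq M] [DecidableEq A]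
    (γ : ℝ)
    (α : ℝ)
    (f g : S → M)
    (traj : ℕ → S × A × ℝ × S)
    (Qf Qg : ℕ → S → M → A → ℝ)
    (hunif : ∀ s m m' a, Qf 0 s m a = Qf 0 s m' a)
    (hinit : ∀ s m a, Qf 0 s m a = Qg 0 s m a)
    (hQf : ∀ t s m a,
      Qf (t + 1) s m a =
        if s = (traj t).1 ∧ m = f (traj t).1 ∧ a = (traj t).2.1 then
          (1 - α) * Qf t s m a +
            α * ((traj t).2.2.1 + γ *
              Finset.univ.sup' Finset.univ_nonempty
                (fun a' => Qf t (traj t).2.2.2 (f (traj t).2.2.2) a'))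
        else Qf t s m a)
    (hQg : ∀ t s m a,
      Qg (t + 1) s m a =
        if s = (traj t).1 ∧ m = g (traj t).1 ∧ a = (traj t).2.1 then
          (1 - α) * Qg t s m a +
            α * ((traj t).2.2.1 + γ *
              Finset.univ.sup' Finset.univ_nonempty
                (fun a' => Qg t (traj t).2.2.2 (g (traj t).2.2.2) a'))
        else Qg t s m a) :
    ∀ (t : ℕ) (s : S) (a : A), Qf t s (f s) a = Qg t s (g s) a := by
  let u (t : ℕ) (q : ℝ) (v : A → ℝ) : ℝ :=
    (1 - α) * q + α * ((traj t).2.2.1 + γ * Finset.univ.sup' Finset.univ_nonempty v)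
  have executed_eq : ∀ t,
      (fun s a => Qf t s (f s) a) = (fun s a => Qg t s (g s) a) := by
    intro t
    induction t with
    | zero => funext s a; rw [hunif s (f s) (g s) a, hinit]
    | succ t ih =>
      rw [executed_eq_updateVisited f _ _ (traj t).2.2.2 (u t) _ _ (hQf t),
        executed_eq_updateVisited g _ _ (traj t).2.2.2 (u t) _ _ (hQg t), ih]
  exact fun t s a => congrFun (congrFun (executed_eq t) s) a

/-- Proposition 1 instantiated for tabular Q-learning: with uniform initialisation along
the message axis, identical visited base transitions `(s_t, a_t, r_t, s'_t)`, and the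
Q-learning update applied only at the visited augmented entry `(s_t, f s_t, a_t)`
(resp. `(s_t, g s_t, a_t)`), the executed value tables agree:
`Qf t s (f s) a = Qg t s (g s) a` for all `t, s, a`. -/
theorem q_learning_independent_of_adversary
    {S M A : Type} [Fintype S] [Fintype M] [Fintype A]
    [Nonempty A] [DecidableEq S] [DecidableEq M] [DecidableEq A]
    (γ : ℝ) (hγ0 : 0 ≤ γ) (hγ1 : γ < 1)
    (α : ℝ) (hα0 : 0 ≤ α) (hα1 : α ≤ 1)
    (f g : S → M)
    (traj : ℕ → S × A × ℝ × S)
    (Qf Qg : ℕ → S → M → A → ℝ)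
    (hunif : ∀ s m m' a, Qf 0 s m a = Qf 0 s m' a)
    (hinit : ∀ s m a, Qf 0 s m a = Qg 0 s m a)
    (hQf : ∀ t s m a,
      Qf (t + 1) s m a =
        if s = (traj t).1 ∧ m = f (traj t).1 ∧ a = (traj t).2.1 then
          (1 - α) * Qf t s m a +
            α * ((traj t).2.2.1 + γ *
              Finset.univ.sup' Finset.univ_nonempty
                (fun a' => Qf t (traj t).2.2.2 (f (traj t).2.2.2) a'))
        else Qf t s m a)
    (hQg : ∀ t s m a,
      Qg (t + 1) s m a =
        if s = (traj t).1 ∧ m = g (traj t).1 ∧ a = (traj t).2.1 then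
          (1 - α) * Qg t s m a +
            α * ((traj t).2.2.1 + γ *
              Finset.univ.sup' Finset.univ_nonempty
                (fun a' => Qg t (traj t).2.2.2 (g (traj t).2.2.2) a'))
        else Qg t s m a) :
    ∀ (t : ℕ) (s : S) (a : A), Qf t s (f s) a = Qg t s (g s) a :=
  q_learning_independent_of_adversary_general γ α f g traj Qf Qg hunif hinit hQf hQg
end
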